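/- Let G be a finite directed graph, s a vertex, X a partial observation with (s,0) ∈ X, and let T be a perfect consistent tree w.r.t. X such that every leaf of T (vertex of T with no outgoing edge in T) occurs as the first component of some pair in X. Then for every vertex u of T there exists a pair (v,t) ∈ X such that dist_G(s,u) + dist_G(u,v) ≤ t. (This is the correctness of the pruning rule used to construct the backbone network: any vertex u with dist(s,u) + dist(u,v) > t for all observation points (v,t) can be removed.) -/

import Mathlib

/-- `IsWalk E u v l`: the nonempty list `l` of vertices is a walk from `u` to `v`
along the edge relation `E` (consecutive vertices are joined by an edge). -/
def IsWalk {V : Type*} (E : V → V → Prop) (u v : V) (l : List V) : Prop :=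
  l.head? = some u ∧ l.getLast? = some v ∧ l.Chain' E

/-- The length (number of edges) of a walk given by its list of vertices. -/
def wlen {V : Type*} (l : List V) : ℕ := l.length - 1

/-- `v` is reachable from `u` along the edge relation `E`. -/
def Reach {V : Type*} (E : V → V → Prop) (u v : V) : Prop := ∃ l, IsWalk E u v l

/-- The distance from `u` to `v`: the minimum length of a walk from `u` to `v`
(equal to `0` by convention when `v` is not reachable from `u`). -/
noncomputable def gdist {V : Type*} (E : V → V → Prop) (u v : V) : ℕ :=
  sInf {n | ∃ l, IsWalk E u v l ∧ wlen l = n}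

/-- An arborescence of the graph with edge relation `E`, rooted at `s`:
a subgraph (given by its vertex set and edge relation) containing `s`,
in which every vertex is joined from `s` by a unique path. -/
structure Arb {V : Type*} (E : V → V → Prop) (s : V) where
  verts : Set V
  edges : V → V → Prop
  edges_sub : ∀ u v, edges u v → E u v
  edges_mem : ∀ u v, edges u v → u ∈ verts ∧ v ∈ verts
  root_mem : s ∈ verts
  unique_walk : ∀ v ∈ verts, ∃! l, IsWalk edges s v l

/-!
Follow the tree path from `s` to `u` and then keep descending in `T` from `u`. Since the path
from the root to each vertex of an arborescence is unique, a walk from the root never revisits a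
vertex, so in a finite graph the descent stops, at a leaf `w` of `T`. By hypothesis `(w, t) ∈ X`
for some `t`, and perfectness says that the tree path `s ⇝ u ⇝ w` has length exactly `t`; its two
pieces bound `dist_G(s,u)` and `dist_G(u,w)`.
-/

section Walks

variable {V : Type*} {E F : V → V → Prop} {s u v w z : V} {l m : List V}

namespace IsWalk

lemma ne_nil (h : IsWalk E u v l) : l ≠ [] := by
  rintro rfl
  simp [IsWalk] at h

lemma mono (hEF : ∀ a b, E a b → F a b) (h : IsWalk E u v l) : IsWalk F u v l :=
  ⟨h.1, h.2.1, h.2.2.imp hEF⟩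

lemma singleton (E : V → V → Prop) (u : V) : IsWalk E u u [u] :=
  ⟨rfl, rfl, List.isChain_singleton _⟩

lemma head?_append (h : IsWalk E u v l) : (l ++ m).head? = some u := by
  rw [List.head?_append_of_ne_nil _ h.ne_nil, h.1]

lemma concat (h : IsWalk E s u l) (hz : E u z) : IsWalk E s z (l ++ [z]) :=
  ⟨h.head?_append, List.getLast?_concat,
    h.2.2.append (List.isChain_singleton z) (by simp [h.2.1, hz])⟩

lemma cons (hz : E u z) (h : IsWalk E z w l) : IsWalk E u w (u :: l) := by
  refine ⟨rfl, ?_, h.2.2.cons (by simp [h.1, hz])⟩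
  rw [List.getLast?_cons, h.2.1]
  rfl

lemma take (h : IsWalk E s v l) {i : ℕ} (hi : i < l.length) :
    IsWalk E s l[i] (l.take (i + 1)) := by
  refine ⟨?_, ?_, h.2.2.take _⟩
  · rw [List.head?_take, if_neg (by omega), h.1]
  · rw [List.getLast?_take, if_neg (by omega), Nat.add_sub_cancel,
      List.getElem?_eq_getElem hi]
    rfl

lemma append (h₁ : IsWalk E s u l) (h₂ : IsWalk E u w m) : IsWalk E s w (l ++ m.tail) := by
  obtain ⟨a, m, rfl⟩ := List.exists_cons_of_ne_nil h₂.ne_nil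
  obtain rfl : a = u := by simpa using h₂.1
  refine ⟨h₁.head?_append, ?_, h₁.2.2.append h₂.2.2.tail ?_⟩
  · rcases m with _ | ⟨b, m⟩
    · simpa [h₁.2.1] using h₂.2.1
    · simpa [List.getLast?_append] using h₂.2.1
  · intro x hx y hy
    rw [h₁.2.1, Option.mem_some_iff] at hx
    subst hx
    exact (List.isChain_cons.1 h₂.2.2).1 y hy

lemma wlen_append (h₁ : IsWalk E s u l) (h₂ : IsWalk E u w m) :
    wlen (l ++ m.tail) = wlen l + wlen m := by
  have := List.length_pos_iff.2 h₁.ne_nil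
  have := List.length_pos_iff.2 h₂.ne_nil
  simp only [wlen, List.length_append, List.length_tail]
  omega

end IsWalk

lemma gdist_le_wlen (h : IsWalk E u v l) : gdist E u v ≤ wlen l :=
  Nat.sInf_le ⟨l, h, rfl⟩

namespace Arb

variable (T : Arb E s)

lemma mem_verts_of_isWalk (h : IsWalk T.edges s v l) : v ∈ T.verts := by
  rcases List.eq_nil_or_concat' l with rfl | ⟨L, b, rfl⟩
  · exact absurd rfl h.ne_nil
  obtain rfl : b = v := by simpa using h.2.1
  rcases List.eq_nil_or_concat' L with rfl | ⟨L, a, rfl⟩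
  · obtain rfl : b = s := by simpa using h.1
    exact T.root_mem
  · exact (T.edges_mem a b ((List.isChain_append.1 h.2.2).2.2 a (by simp) b rfl)).2

lemma nodup_of_isWalk (h : IsWalk T.edges s v l) : l.Nodup := by
  rw [List.Nodup, List.pairwise_iff_getElem]
  intro i j hi hj hij hlij
  have hprefix := (T.unique_walk _ (T.mem_verts_of_isWalk (h.take hj))).unique
    (hlij ▸ h.take hi) (h.take hj)
  have hlen := congrArg List.length hprefix
  simp only [List.length_take] at hlen
  omega

theorem exists_walk_to_leaf [Fintype V] {u : V} {l : List V} (h : IsWalk T.edges s u l) :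
    ∃ w m, IsWalk T.edges u w m ∧ ∀ z, ¬ T.edges w z := by
  by_cases hleaf : ∀ z, ¬ T.edges u z
  · exact ⟨u, [u], .singleton _ u, hleaf⟩
  obtain ⟨z, hz⟩ := not_forall_not.1 hleaf
  obtain ⟨w, m, hm, hw⟩ := exists_walk_to_leaf (h.concat hz)
  exact ⟨w, u :: m, hm.cons hz, hw⟩
termination_by Fintype.card V - l.length
decreasing_by
  have := (T.nodup_of_isWalk (h.concat hz)).length_le_card
  simp only [List.length_append, List.length_singleton] at this ⊢
  omega

end Arb

end Walks

theorem stmt_9_general {V : Type*} [Fintype V] (E : V → V → Prop) (s : V)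
    (X : Finset (V × ℕ)) (T : Arb E s)
    (hperf : ∀ p ∈ X, p.1 ∈ T.verts ∧ ∀ l, IsWalk T.edges s p.1 l → wlen l = p.2)
    (hleaf : ∀ u ∈ T.verts, (∀ z, ¬ T.edges u z) → ∃ t, (u, t) ∈ X) :
    ∀ u ∈ T.verts, ∃ p ∈ X, gdist E s u + gdist E u p.1 ≤ p.2 := by
  intro u hu
  obtain ⟨l, hl, -⟩ := T.unique_walk u hu
  obtain ⟨w, m, hm, hw⟩ := T.exists_walk_to_leaf hl
  obtain ⟨t, hwt⟩ := hleaf w (T.mem_verts_of_isWalk (hl.append hm)) hw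
  refine ⟨(w, t), hwt, ?_⟩
  calc gdist E s u + gdist E u w
      ≤ wlen l + wlen m :=
        add_le_add (gdist_le_wlen (hl.mono T.edges_sub)) (gdist_le_wlen (hm.mono T.edges_sub))
    _ = t := by rw [← hl.wlen_append hm, (hperf _ hwt).2 _ (hl.append hm)]

/-- Correctness of the pruning rule for the backbone network: if `T` is a perfect
consistent tree w.r.t. the partial observation `X` and every leaf of `T` occurs in
`X`, then every vertex `u` of `T` admits an observation point `(v,t) ∈ X` with
`dist_G(s,u) + dist_G(u,v) ≤ t`. -/
theorem stmt_9 {V : Type*} [Fintype V] (E : V → V → Prop) (s : V)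
    (X : Finset (V × ℕ)) (hsX : (s, 0) ∈ X) (T : Arb E s)
    (hperf : ∀ p ∈ X, p.1 ∈ T.verts ∧ ∀ l, IsWalk T.edges s p.1 l → wlen l = p.2)
    (hleaf : ∀ u ∈ T.verts, (∀ z, ¬ T.edges u z) → ∃ t, (u, t) ∈ X) :
    ∀ u ∈ T.verts, ∃ p ∈ X, gdist E s u + gdist E u p.1 ≤ p.2 :=
  stmt_9_general E s X T hperf hleaf
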